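/- Let U be an r×d random matrix with i.i.d. Rademacher entries (taking values +1 and −1 each with probability 1/2), and let w ∈ ℝ^r be a random vector with i.i.d. Gaussian N(0, σ_c²) coordinates, independent of U, with σ_c > 0. Let h ∈ ℝ^d be fixed and let n ≥ 1 and c > 0, and set ĝ = (1/r)·UᵀU h + (1/(n·c·√r))·Uᵀ w. Then E[‖ĝ‖₂²] = (1 + (d−1)/r)·‖h‖₂² + d·σ_c²/(n c)². In particular, if ‖h‖₂ ≤ L then E[‖ĝ‖₂²] ≤ L²·(1 + (d−1)/r) + d·σ_c²/(n c)². -/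

import Mathlib

/-!
Write `ĝ_j = ∑ᵢ U_ij Yᵢ` with `Yᵢ = (1/r) ⟨Uᵢ, h⟩ + κ wᵢ`, `κ = 1/(n c √r)`. The summands are
functions of the disjoint blocks (row `i` of `U`, `wᵢ`) of an independent family, hence
independent, so `E ĝ_j² = ∑ᵢ Var(U_ij Yᵢ) + (∑ᵢ E U_ij Yᵢ)²`. Since `U_ij² = 1`, the moments
`E (U_ij Yᵢ)² = E Yᵢ²` and `E U_ij Yᵢ` are second moments of linear combinations of the centred,
pairwise independent variables `U_i1, …, U_id, wᵢ`: they equal `‖h‖²/r² + κ²σ_c²` and `h_j/r`.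
-/

open MeasureTheory ProbabilityTheory Matrix

/-- The Rademacher distribution: `+1` and `-1` each with probability `1/2`. -/
noncomputable def radMeasure : Measure ℝ :=
  (1 / 2 : ENNReal) • Measure.dirac 1 + (1 / 2 : ENNReal) • Measure.dirac (-1)

lemma transpose_mulVec_smul_add_apply {m n : Type*} [Fintype m] [Fintype n]
    (M : Matrix m n ℝ) (h : n → ℝ) (x : m → ℝ) (a b : ℝ) (j : n) :
    a * (Mᵀ *ᵥ (M *ᵥ h)) j + b * (Mᵀ *ᵥ x) j = ∑ i, M i j * (a * (M *ᵥ h) i + b * x i) := by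
  simp only [mulVec, dotProduct, transpose_apply, mul_add, Finset.mul_sum,
    Finset.sum_add_distrib]
  ring_nf

lemma ae_sq_eq_one_radMeasure : ∀ᵐ x ∂radMeasure, x ^ 2 = 1 := by
  simp [radMeasure]

lemma integral_id_radMeasure : ∫ x, x ∂radMeasure = 0 := by
  have hint (a : ℝ) : Integrable (fun x ↦ x) ((1 / 2 : ENNReal) • Measure.dirac a) :=
    (integrable_dirac (by simp)).smul_measure (by simp)
  rw [radMeasure, integral_add_measure (hint 1) (hint (-1)), integral_smul_measure,
    integral_smul_measure, integral_dirac, integral_dirac]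
  norm_num

section Laws

variable {Ω : Type*} [MeasurableSpace Ω] {P : Measure Ω} {X : Ω → ℝ}

lemma ae_sq_eq_one_of_map_eq_radMeasure (hX : Measurable X) (hlaw : P.map X = radMeasure) :
    ∀ᵐ ω ∂P, X ω ^ 2 = 1 :=
  ae_of_ae_map hX.aemeasurable (hlaw ▸ ae_sq_eq_one_radMeasure)

lemma integral_eq_zero_of_map_eq_radMeasure (hX : Measurable X) (hlaw : P.map X = radMeasure) :
    ∫ ω, X ω ∂P = 0 := by
  rw [← integral_id_radMeasure, ← hlaw,
    integral_map (f := fun x ↦ x) hX.aemeasurable aestronglyMeasurable_id]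

lemma memLp_of_map_eq_radMeasure [IsFiniteMeasure P] (hX : Measurable X)
    (hlaw : P.map X = radMeasure) (p : ENNReal) : MemLp X p P := by
  refine MemLp.of_bound hX.aestronglyMeasurable 1 ?_
  filter_upwards [ae_sq_eq_one_of_map_eq_radMeasure hX hlaw] with ω hω
  rw [Real.norm_eq_abs, ← sq_le_one_iff_abs_le_one, hω]

lemma integral_sq_of_map_eq_radMeasure [IsProbabilityMeasure P] (hX : Measurable X)
    (hlaw : P.map X = radMeasure) : ∫ ω, X ω ^ 2 ∂P = 1 := by
  rw [integral_congr_ae (ae_sq_eq_one_of_map_eq_radMeasure hX hlaw)]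
  simp

variable {v : NNReal}

lemma integral_eq_zero_of_map_eq_gaussianReal (hX : Measurable X)
    (hlaw : P.map X = gaussianReal 0 v) : ∫ ω, X ω ∂P = 0 := by
  rw [← integral_id_gaussianReal (μ := 0) (v := v), ← hlaw,
    integral_map (f := fun x ↦ x) hX.aemeasurable aestronglyMeasurable_id]

lemma memLp_of_map_eq_gaussianReal (hX : Measurable X) (hlaw : P.map X = gaussianReal 0 v)
    (p : ENNReal) (hp : p ≠ ⊤) : MemLp X p P := by
  have := memLp_id_gaussianReal' (μ := 0) (v := v) p hp
  rwa [← hlaw, memLp_map_measure_iff aestronglyMeasurable_id hX.aemeasurable] at this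

lemma integral_sq_of_map_eq_gaussianReal (hX : Measurable X)
    (hlaw : P.map X = gaussianReal 0 v) : ∫ ω, X ω ^ 2 ∂P = v := by
  have hvar := variance_eq_sub (memLp_id_gaussianReal' (μ := 0) (v := v) 2 (by simp))
  rw [variance_id_gaussianReal] at hvar
  rw [← integral_map (f := fun x : ℝ ↦ x ^ 2) hX.aemeasurable
    (measurable_id.pow_const 2).aestronglyMeasurable, hlaw]
  simpa using hvar.symm

end Laws

section Centered

variable {Ω ι : Type*} [MeasurableSpace Ω] {P : Measure Ω} {Z : ι → Ω → ℝ}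

lemma integral_mul_eq_ite_of_pairwise_indepFun (hZ : ∀ a, MemLp (Z a) 2 P)
    (hmean : ∀ a, ∫ ω, Z a ω ∂P = 0) (hind : Pairwise fun a b ↦ IndepFun (Z a) (Z b) P)
    [DecidableEq ι] (a b : ι) :
    ∫ ω, Z a ω * Z b ω ∂P = if a = b then ∫ ω, Z a ω ^ 2 ∂P else 0 := by
  split_ifs with hab
  · simp [hab, sq]
  · rw [(hind hab).integral_fun_mul_eq_mul_integral (hZ a).aestronglyMeasurable
      (hZ b).aestronglyMeasurable, hmean a, zero_mul]

lemma integral_mul_sum_of_pairwise_indepFun [Fintype ι] (hZ : ∀ a, MemLp (Z a) 2 P)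
    (hmean : ∀ a, ∫ ω, Z a ω ∂P = 0) (hind : Pairwise fun a b ↦ IndepFun (Z a) (Z b) P)
    (c : ι → ℝ) (b : ι) :
    ∫ ω, Z b ω * ∑ a, c a * Z a ω ∂P = c b * ∫ ω, Z b ω ^ 2 ∂P := by
  classical
  simp_rw [Finset.mul_sum, mul_left_comm (Z b _)]
  rw [integral_finsetSum]
  · simp_rw [integral_const_mul, integral_mul_eq_ite_of_pairwise_indepFun hZ hmean hind,
      mul_ite, mul_zero, eq_comm (a := b)]
    simp
  · exact fun a _ ↦ ((hZ b).integrable_mul (hZ a)).const_mul (c a)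

lemma integral_sum_mul_sq_of_pairwise_indepFun [Fintype ι] (hZ : ∀ a, MemLp (Z a) 2 P)
    (hmean : ∀ a, ∫ ω, Z a ω ∂P = 0) (hind : Pairwise fun a b ↦ IndepFun (Z a) (Z b) P)
    (c : ι → ℝ) :
    ∫ ω, (∑ a, c a * Z a ω) ^ 2 ∂P = ∑ a, c a ^ 2 * ∫ ω, Z a ω ^ 2 ∂P := by
  simp_rw [sq (∑ a, _), Finset.sum_mul, mul_assoc]
  rw [integral_finsetSum]
  · simp_rw [integral_const_mul, integral_mul_sum_of_pairwise_indepFun hZ hmean hind, sq,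
      mul_assoc]
  · exact fun b _ ↦ ((hZ b).integrable_mul
      (memLp_finsetSum _ fun a _ ↦ (hZ a).const_mul (c a))).const_mul _

end Centered

lemma integral_sum_sq_of_pairwise_indepFun {Ω ι : Type*} [MeasurableSpace Ω] {P : Measure Ω}
    [IsProbabilityMeasure P] {X : ι → Ω → ℝ} (s : Finset ι) (hX : ∀ i ∈ s, MemLp (X i) 2 P)
    (hind : Set.Pairwise s fun i j ↦ IndepFun (X i) (X j) P) :
    ∫ ω, (∑ i ∈ s, X i ω) ^ 2 ∂P
      = ∑ i ∈ s, (∫ ω, X i ω ^ 2 ∂P - (∫ ω, X i ω ∂P) ^ 2) + (∑ i ∈ s, ∫ ω, X i ω ∂P) ^ 2 := by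
  have hsum := IndepFun.variance_sum hX hind
  rw [variance_eq_sub (memLp_finsetSum' s hX),
    Finset.sum_congr rfl fun i hi ↦ variance_eq_sub (hX i hi)] at hsum
  simp only [Pi.pow_apply, Finset.sum_apply] at hsum
  rw [integral_finsetSum s fun i hi ↦ (hX i hi).integrable one_le_two] at hsum
  linarith

lemma ProbabilityTheory.iIndepFun.indepFun_comp_row {Ω α β E γ δ : Type*} [MeasurableSpace Ω]
    {P : Measure Ω} [MeasurableSpace E] [MeasurableSpace γ] [MeasurableSpace δ] [Fintype β]
    {X : α × β → Ω → E} (hX : iIndepFun X P) (hmeas : ∀ k, Measurable (X k))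
    {F : (β → E) → γ} {G : (β → E) → δ} (hF : Measurable F) (hG : Measurable G) {a a' : α}
    (ha : a ≠ a') :
    IndepFun (fun ω ↦ F fun b ↦ X (a, b) ω) (fun ω ↦ G fun b ↦ X (a', b) ω) P := by
  classical
  have hdisj : Disjoint ({a} ×ˢ Finset.univ : Finset (α × β)) ({a'} ×ˢ Finset.univ) := by
    simp [Finset.disjoint_left, ha.symm]
  exact (hX.indepFun_finset _ _ hdisj hmeas).comp
    (φ := fun x ↦ F fun b ↦ x ⟨(a, b), by simp⟩) (ψ := fun x ↦ G fun b ↦ x ⟨(a', b), by simp⟩)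
    (hF.comp (measurable_pi_lambda _ fun _ ↦ measurable_pi_apply _))
    (hG.comp (measurable_pi_lambda _ fun _ ↦ measurable_pi_apply _))

section Rows

variable {Ω α β : Type*} [MeasurableSpace Ω] {P : Measure Ω} [Fintype β]
  {W : α × Option β → Ω → ℝ}

lemma memLp_mul_sum_row (hL2 : ∀ k, MemLp (W k) 2 P)
    (hsign : ∀ a b, ∀ᵐ ω ∂P, W (a, some b) ω ^ 2 = 1) (c : Option β → ℝ) (a : α) (b : β) :
    MemLp (fun ω ↦ W (a, some b) ω * ∑ o, c o * W (a, o) ω) 2 P := by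
  have hrow : MemLp (fun ω ↦ ∑ o, c o * W (a, o) ω) 2 P :=
    memLp_finsetSum _ fun o _ ↦ (hL2 (a, o)).const_mul (c o)
  refine hrow.of_le ((hL2 _).aestronglyMeasurable.mul hrow.aestronglyMeasurable) ?_
  filter_upwards [hsign a b] with ω hω
  rw [norm_mul, Real.norm_eq_abs (W _ ω)]
  exact mul_le_of_le_one_left (norm_nonneg _) ((sq_le_one_iff_abs_le_one _).mp hω.le)

lemma integral_mul_sum_row_sq (hind : iIndepFun W P) (hL2 : ∀ k, MemLp (W k) 2 P)
    (hmean : ∀ k, ∫ ω, W k ω ∂P = 0) (hsign : ∀ a b, ∀ᵐ ω ∂P, W (a, some b) ω ^ 2 = 1)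
    (c : Option β → ℝ) (a : α) (b : β) :
    ∫ ω, (W (a, some b) ω * ∑ o, c o * W (a, o) ω) ^ 2 ∂P
      = ∑ o, c o ^ 2 * ∫ ω, W (a, o) ω ^ 2 ∂P := by
  have hsq : (fun ω ↦ (W (a, some b) ω * ∑ o, c o * W (a, o) ω) ^ 2)
      =ᵐ[P] fun ω ↦ (∑ o, c o * W (a, o) ω) ^ 2 := by
    filter_upwards [hsign a b] with ω hω
    rw [mul_pow, hω, one_mul]
  rw [integral_congr_ae hsq]
  exact integral_sum_mul_sq_of_pairwise_indepFun (Z := fun o ↦ W (a, o)) (fun _ ↦ hL2 _)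
    (fun _ ↦ hmean _) (fun _ _ h ↦ hind.indepFun (by simpa using h)) c

variable [IsProbabilityMeasure P]

lemma integral_mul_sum_row (hind : iIndepFun W P) (hL2 : ∀ k, MemLp (W k) 2 P)
    (hmean : ∀ k, ∫ ω, W k ω ∂P = 0) (hsign : ∀ a b, ∀ᵐ ω ∂P, W (a, some b) ω ^ 2 = 1)
    (c : Option β → ℝ) (a : α) (b : β) :
    ∫ ω, W (a, some b) ω * ∑ o, c o * W (a, o) ω ∂P = c (some b) := by
  rw [integral_mul_sum_of_pairwise_indepFun (Z := fun o ↦ W (a, o)) (fun _ ↦ hL2 _)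
    (fun _ ↦ hmean _) (fun _ _ h ↦ hind.indepFun (by simpa using h)),
    integral_congr_ae (hsign a b)]
  simp

variable [Fintype α]

lemma integral_sum_mul_sum_row_sq (hind : iIndepFun W P) (hmeas : ∀ k, Measurable (W k))
    (hL2 : ∀ k, MemLp (W k) 2 P) (hmean : ∀ k, ∫ ω, W k ω ∂P = 0)
    (hsign : ∀ a b, ∀ᵐ ω ∂P, W (a, some b) ω ^ 2 = 1) (c : Option β → ℝ) (b : β) :
    ∫ ω, (∑ a, W (a, some b) ω * ∑ o, c o * W (a, o) ω) ^ 2 ∂P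
      = ∑ a, (∑ o, c o ^ 2 * ∫ ω, W (a, o) ω ^ 2 ∂P - c (some b) ^ 2)
        + (Fintype.card α * c (some b)) ^ 2 := by
  rw [integral_sum_sq_of_pairwise_indepFun _ (fun a _ ↦ memLp_mul_sum_row hL2 hsign c a b)
    fun a _ a' _ h ↦ hind.indepFun_comp_row hmeas (F := fun x ↦ x (some b) * ∑ o, c o * x o)
      (G := fun x ↦ x (some b) * ∑ o, c o * x o) (by fun_prop) (by fun_prop) h]
  simp only [integral_mul_sum_row hind hL2 hmean hsign,
    integral_mul_sum_row_sq hind hL2 hmean hsign, Finset.sum_const, Finset.card_univ,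
    nsmul_eq_mul]

lemma integral_sum_sum_mul_sum_row_sq (hind : iIndepFun W P) (hmeas : ∀ k, Measurable (W k))
    (hL2 : ∀ k, MemLp (W k) 2 P) (hmean : ∀ k, ∫ ω, W k ω ∂P = 0)
    (hsign : ∀ a b, ∀ᵐ ω ∂P, W (a, some b) ω ^ 2 = 1) (c : Option β → ℝ) :
    ∫ ω, ∑ b, (∑ a, W (a, some b) ω * ∑ o, c o * W (a, o) ω) ^ 2 ∂P
      = ∑ b, (∑ a, (∑ o, c o ^ 2 * ∫ ω, W (a, o) ω ^ 2 ∂P - c (some b) ^ 2)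
        + (Fintype.card α * c (some b)) ^ 2) := by
  rw [integral_finsetSum _ fun b _ ↦
    (memLp_finsetSum _ fun a _ ↦ memLp_mul_sum_row hL2 hsign c a b).integrable_sq]
  exact Finset.sum_congr rfl fun b _ ↦
    integral_sum_mul_sum_row_sq hind hmeas hL2 hmean hsign c b

end Rows

/-- Indexing the entries `U_ij` by `(i, some j)` and the noise `wᵢ` by `(i, none)` makes row `i`
of `U` together with `wᵢ` the block `{i} × Option (Fin d)`. -/
def entryOrNoise {r d : ℕ} : Fin r × Option (Fin d) → (Fin r × Fin d) ⊕ Fin r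
  | (i, none) => .inr i
  | (i, some j) => .inl (i, j)

lemma entryOrNoise_injective {r d : ℕ} : Function.Injective (@entryOrNoise r d) := by
  rintro ⟨i, _ | j⟩ ⟨i', _ | j'⟩ h <;> simp_all [entryOrNoise]

section Sketch

variable {Ω : Type*} {r d : ℕ} (U : Ω → Matrix (Fin r) (Fin d) ℝ) (w : Ω → Fin r → ℝ)

def sketchVar (k : Fin r × Option (Fin d)) : Ω → ℝ :=
  Sum.elim (fun p ω ↦ U ω p.1 p.2) (fun q ω ↦ w ω q) (entryOrNoise k)

@[simp] lemma sketchVar_some (i : Fin r) (j : Fin d) :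
    sketchVar U w (i, some j) = fun ω ↦ U ω i j := rfl

@[simp] lemma sketchVar_none (i : Fin r) : sketchVar U w (i, none) = fun ω ↦ w ω i := rfl

def rowCoeff (a b : ℝ) (h : Fin d → ℝ) (o : Option (Fin d)) : ℝ :=
  o.elim b fun j ↦ a * h j

lemma transpose_mulVec_smul_add_apply_eq_sum_sketchVar (h : Fin d → ℝ) (a b : ℝ) (ω : Ω)
    (j : Fin d) :
    a * ((U ω)ᵀ *ᵥ (U ω *ᵥ h)) j + b * ((U ω)ᵀ *ᵥ w ω) j
      = ∑ i, sketchVar U w (i, some j) ω * ∑ o, rowCoeff a b h o * sketchVar U w (i, o) ω := by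
  rw [transpose_mulVec_smul_add_apply]
  refine Finset.sum_congr rfl fun i _ ↦ ?_
  simp only [Fintype.sum_option, rowCoeff, Option.elim, sketchVar_some, sketchVar_none, mulVec,
    dotProduct, Finset.mul_sum]
  rw [add_comm (b * _)]
  congr 2
  exact Finset.sum_congr rfl fun _ _ ↦ by ring

variable {U w} [MeasurableSpace Ω] {P : Measure Ω}

lemma measurable_sketchVar (hU : ∀ i j, Measurable fun ω ↦ U ω i j)
    (hw : ∀ q, Measurable fun ω ↦ w ω q) : ∀ k, Measurable (sketchVar U w k)
  | (i, none) => hw i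
  | (i, some j) => hU i j

lemma iIndepFun_sketchVar
    (hIndep : iIndepFun (Sum.elim (fun p : Fin r × Fin d ↦ fun ω ↦ U ω p.1 p.2)
      (fun q : Fin r ↦ fun ω ↦ w ω q)) P) :
    iIndepFun (sketchVar U w) P :=
  (hIndep.precomp entryOrNoise_injective :)

variable {v : NNReal}

lemma integral_sketchVar (hU : ∀ i j, Measurable fun ω ↦ U ω i j)
    (hw : ∀ q, Measurable fun ω ↦ w ω q) (hLawU : ∀ i j, P.map (fun ω ↦ U ω i j) = radMeasure)
    (hLaww : ∀ q, P.map (fun ω ↦ w ω q) = gaussianReal 0 v) :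
    ∀ k, ∫ ω, sketchVar U w k ω ∂P = 0
  | (i, none) => integral_eq_zero_of_map_eq_gaussianReal (hw i) (hLaww i)
  | (i, some j) => integral_eq_zero_of_map_eq_radMeasure (hU i j) (hLawU i j)

variable [IsProbabilityMeasure P]

lemma memLp_sketchVar (hU : ∀ i j, Measurable fun ω ↦ U ω i j)
    (hw : ∀ q, Measurable fun ω ↦ w ω q) (hLawU : ∀ i j, P.map (fun ω ↦ U ω i j) = radMeasure)
    (hLaww : ∀ q, P.map (fun ω ↦ w ω q) = gaussianReal 0 v) :
    ∀ k, MemLp (sketchVar U w k) 2 P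
  | (i, none) => memLp_of_map_eq_gaussianReal (hw i) (hLaww i) 2 (by simp)
  | (i, some j) => memLp_of_map_eq_radMeasure (hU i j) (hLawU i j) 2

lemma integral_sketchVar_sq (hU : ∀ i j, Measurable fun ω ↦ U ω i j)
    (hw : ∀ q, Measurable fun ω ↦ w ω q) (hLawU : ∀ i j, P.map (fun ω ↦ U ω i j) = radMeasure)
    (hLaww : ∀ q, P.map (fun ω ↦ w ω q) = gaussianReal 0 v) :
    ∀ k, ∫ ω, sketchVar U w k ω ^ 2 ∂P = k.2.elim (v : ℝ) fun _ ↦ 1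
  | (i, none) => integral_sq_of_map_eq_gaussianReal (hw i) (hLaww i)
  | (i, some j) => integral_sq_of_map_eq_radMeasure (hU i j) (hLawU i j)

lemma integral_sum_transpose_mulVec_smul_add_sq (hU : ∀ i j, Measurable fun ω ↦ U ω i j)
    (hw : ∀ q, Measurable fun ω ↦ w ω q)
    (hIndep : iIndepFun (Sum.elim (fun p : Fin r × Fin d ↦ fun ω ↦ U ω p.1 p.2)
      (fun q : Fin r ↦ fun ω ↦ w ω q)) P)
    (hLawU : ∀ i j, P.map (fun ω ↦ U ω i j) = radMeasure)
    (hLaww : ∀ q, P.map (fun ω ↦ w ω q) = gaussianReal 0 v) (h : Fin d → ℝ) (a b : ℝ) :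
    ∫ ω, ∑ j, (a * ((U ω)ᵀ *ᵥ (U ω *ᵥ h)) j + b * ((U ω)ᵀ *ᵥ w ω) j) ^ 2 ∂P
      = d * r * (b ^ 2 * v + a ^ 2 * ∑ j, h j ^ 2) + r * (r - 1) * a ^ 2 * ∑ j, h j ^ 2 := by
  simp_rw [transpose_mulVec_smul_add_apply_eq_sum_sketchVar]
  rw [integral_sum_sum_mul_sum_row_sq (iIndepFun_sketchVar hIndep) (measurable_sketchVar hU hw)
    (memLp_sketchVar hU hw hLawU hLaww) (integral_sketchVar hU hw hLawU hLaww)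
    (fun i j ↦ ae_sq_eq_one_of_map_eq_radMeasure (hU i j) (hLawU i j))]
  simp only [integral_sketchVar_sq hU hw hLawU hLaww, Fintype.sum_option, rowCoeff, Option.elim,
    mul_one, Finset.sum_const, Finset.card_univ, Fintype.card_fin, nsmul_eq_mul,
    Finset.sum_add_distrib, ← Finset.mul_sum, mul_pow, Finset.sum_sub_distrib]
  ring

end Sketch

theorem stmt19_general {Ωs : Type*} [MeasurableSpace Ωs] (P : Measure Ωs) [IsProbabilityMeasure P]
    (r d : ℕ) (hr : 1 ≤ r)
    (σc : ℝ)
    (U : Ωs → Matrix (Fin r) (Fin d) ℝ) (w : Ωs → Fin r → ℝ)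
    (hMeasU : ∀ i j, Measurable (fun ω => U ω i j))
    (hMeasw : ∀ q, Measurable (fun ω => w ω q))
    (hIndep : iIndepFun
      (Sum.elim (fun p : Fin r × Fin d => fun ω => U ω p.1 p.2)
        (fun q : Fin r => fun ω => w ω q)) P)
    (hLawU : ∀ i j, Measure.map (fun ω => U ω i j) P = radMeasure)
    (hLaww : ∀ q, Measure.map (fun ω => w ω q) P = gaussianReal 0 (Real.toNNReal (σc ^ 2)))
    (h : Fin d → ℝ) (n : ℕ) (c : ℝ) (L : ℝ) :
    (∫ ω, ∑ j, ((1 / (r : ℝ)) * ((U ω)ᵀ *ᵥ (U ω *ᵥ h)) j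
          + (1 / ((n : ℝ) * c * Real.sqrt r)) * ((U ω)ᵀ *ᵥ w ω) j) ^ 2 ∂P
        = (1 + ((d : ℝ) - 1) / (r : ℝ)) * ∑ j, h j ^ 2
          + (d : ℝ) * σc ^ 2 / ((n : ℝ) * c) ^ 2)
      ∧ (Real.sqrt (∑ j, h j ^ 2) ≤ L →
        ∫ ω, ∑ j, ((1 / (r : ℝ)) * ((U ω)ᵀ *ᵥ (U ω *ᵥ h)) j
            + (1 / ((n : ℝ) * c * Real.sqrt r)) * ((U ω)ᵀ *ᵥ w ω) j) ^ 2 ∂P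
          ≤ L ^ 2 * (1 + ((d : ℝ) - 1) / (r : ℝ))
            + (d : ℝ) * σc ^ 2 / ((n : ℝ) * c) ^ 2) := by
  have hσ : ((σc ^ 2).toNNReal : ℝ) = σc ^ 2 := Real.coe_toNNReal _ (sq_nonneg σc)
  have hκ : (1 / ((n : ℝ) * c * Real.sqrt r)) ^ 2 = (((n : ℝ) * c) ^ 2)⁻¹ / r := by
    rw [div_pow, mul_pow, Real.sq_sqrt r.cast_nonneg]
    field_simp
  have hvalue := integral_sum_transpose_mulVec_smul_add_sq hMeasU hMeasw hIndep hLawU hLaww h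
    (1 / (r : ℝ)) (1 / ((n : ℝ) * c * Real.sqrt r))
  rw [hσ, hκ] at hvalue
  have hclosed : _ = (1 + ((d : ℝ) - 1) / r) * ∑ j, h j ^ 2 + d * σc ^ 2 / ((n : ℝ) * c) ^ 2 :=
    hvalue.trans (by field_simp; ring)
  refine ⟨hclosed, fun hL ↦ hclosed ▸ ?_⟩
  have hH : ∑ j, h j ^ 2 ≤ L ^ 2 := (Real.sqrt_le_iff.mp hL).2
  have hfactor : 0 ≤ 1 + ((d : ℝ) - 1) / r := by
    have hr' : (1 : ℝ) ≤ r := by exact_mod_cast hr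
    have : (-1 : ℝ) ≤ ((d : ℝ) - 1) / r := by
      rw [le_div_iff₀ (by positivity)]
      linarith [d.cast_nonneg (α := ℝ)]
    linarith
  nlinarith [mul_le_mul_of_nonneg_left hH hfactor]

/-- Second moment of the parameter server's gradient estimate (key step of Theorem 3): with
`U` an `r × d` i.i.d. Rademacher matrix independent of the Gaussian noise vector `w` with
i.i.d. `N(0, σ_c²)` coordinates, and `ĝ = (1/r) Uᵀ U h + (1/(n c √r)) Uᵀ w`,
`E[‖ĝ‖₂²] = (1 + (d-1)/r) ‖h‖₂² + d σ_c²/(n c)²`; in particular, if `‖h‖₂ ≤ L` then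
`E[‖ĝ‖₂²] ≤ L² (1 + (d-1)/r) + d σ_c²/(n c)²`. -/
theorem stmt19 {Ωs : Type*} [MeasurableSpace Ωs] (P : Measure Ωs) [IsProbabilityMeasure P]
    (r d : ℕ) (hr : 1 ≤ r) (hd : 1 ≤ d)
    (σc : ℝ) (hσc : 0 < σc)
    (U : Ωs → Matrix (Fin r) (Fin d) ℝ) (w : Ωs → Fin r → ℝ)
    (hMeasU : ∀ i j, Measurable (fun ω => U ω i j))
    (hMeasw : ∀ q, Measurable (fun ω => w ω q))
    (hIndep : iIndepFun
      (Sum.elim (fun p : Fin r × Fin d => fun ω => U ω p.1 p.2)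
        (fun q : Fin r => fun ω => w ω q)) P)
    (hLawU : ∀ i j, Measure.map (fun ω => U ω i j) P = radMeasure)
    (hLaww : ∀ q, Measure.map (fun ω => w ω q) P = gaussianReal 0 (Real.toNNReal (σc ^ 2)))
    (h : Fin d → ℝ) (n : ℕ) (hn : 1 ≤ n) (c : ℝ) (hc : 0 < c) (L : ℝ) :
    (∫ ω, ∑ j, ((1 / (r : ℝ)) * ((U ω)ᵀ *ᵥ (U ω *ᵥ h)) j
          + (1 / ((n : ℝ) * c * Real.sqrt r)) * ((U ω)ᵀ *ᵥ w ω) j) ^ 2 ∂P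
        = (1 + ((d : ℝ) - 1) / (r : ℝ)) * ∑ j, h j ^ 2
          + (d : ℝ) * σc ^ 2 / ((n : ℝ) * c) ^ 2)
      ∧ (Real.sqrt (∑ j, h j ^ 2) ≤ L →
        ∫ ω, ∑ j, ((1 / (r : ℝ)) * ((U ω)ᵀ *ᵥ (U ω *ᵥ h)) j
            + (1 / ((n : ℝ) * c * Real.sqrt r)) * ((U ω)ᵀ *ᵥ w ω) j) ^ 2 ∂P
          ≤ L ^ 2 * (1 + ((d : ℝ) - 1) / (r : ℝ))
            + (d : ℝ) * σc ^ 2 / ((n : ℝ) * c) ^ 2) :=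
  stmt19_general P r d hr σc U w hMeasU hMeasw hIndep hLawU hLaww h n c L
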